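/- Polya's theorem implication for principal ideals: if a homogeneous polynomial p ∈ R[x_1,...,x_n] is strictly positive on the standard simplex {x ≥ 0 : Σ x_i = 1}, then for some N, the polynomial (x_1 + ... + x_n)^N · p has only nonnegative coefficients; in particular, the ideal ⟨p⟩ contains a positive polynomial. -/

import Mathlib

open Finset MvPolynomial

lemma aux_abs_prod_sub {ι : Type*} (s : Finset ι) (u v : ι → ℝ)
    (hu : ∀ i ∈ s, |u i| ≤ 1) (hv : ∀ i ∈ s, |v i| ≤ 1) :
    |∏ i ∈ s, u i - ∏ i ∈ s, v i| ≤ ∑ i ∈ s, |u i - v i| := by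
  induction s using Finset.cons_induction with
  | empty => simp
  | cons a s ha ih =>
    simp only [Finset.prod_cons, Finset.sum_cons]
    have hP : |∏ i ∈ s, u i| ≤ 1 := by
      rw [Finset.abs_prod]
      exact Finset.prod_le_one (fun i _ => abs_nonneg _) (fun i hi => hu i (Finset.mem_cons.2 (Or.inr hi)))
    have hva : |v a| ≤ 1 := hv a (Finset.mem_cons_self ..)
    calc |u a * ∏ i ∈ s, u i - v a * ∏ i ∈ s, v i|
        ≤ |u a * ∏ i ∈ s, u i - v a * ∏ i ∈ s, u i| +
          |v a * ∏ i ∈ s, u i - v a * ∏ i ∈ s, v i| := abs_sub_le _ _ _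
      _ ≤ |u a - v a| * 1 + 1 * |∏ i ∈ s, u i - ∏ i ∈ s, v i| := by
          rw [← sub_mul, ← mul_sub, abs_mul, abs_mul]
          gcongr <;> first | exact abs_nonneg _ | rfl
      _ ≤ |u a - v a| + ∑ i ∈ s, |u i - v i| := by
          rw [mul_one, one_mul]
          gcongr
          exact ih (fun i hi => hu i (Finset.mem_cons.2 (Or.inr hi)))
            (fun i hi => hv i (Finset.mem_cons.2 (Or.inr hi)))

lemma aux_cast_desc (b a : ℕ) :
    ((b.descFactorial a : ℕ) : ℝ) = ∏ j ∈ range a, ((b : ℝ) - j) := by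
  induction a with
  | zero => simp
  | succ a ih =>
    rw [Finset.prod_range_succ, ← ih, Nat.descFactorial_succ]
    rcases lt_or_ge b a with h | h
    · rw [Nat.descFactorial_eq_zero_iff_lt.2 h]
      simp
    · push_cast [h]
      ring

lemma aux_coeff_pow (n N : ℕ) (γ : Fin n →₀ ℕ) :
    coeff γ ((∑ i, X i : MvPolynomial (Fin n) ℝ) ^ N) =
      if (∑ i, γ i) = N then (Nat.multinomial univ γ : ℝ) else 0 := by
  rw [Finset.sum_pow_eq_sum_piAntidiag, coeff_sum]
  have hterm : ∀ k : Fin n → ℕ,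
      coeff γ ((Nat.multinomial univ k : MvPolynomial (Fin n) ℝ) * ∏ i, X i ^ k i) =
      if Finsupp.equivFunOnFinite.symm k = γ then (Nat.multinomial univ k : ℝ) else 0 := by
    intro k
    have hmon : (∏ i, X i ^ k i : MvPolynomial (Fin n) ℝ) =
        monomial (Finsupp.equivFunOnFinite.symm k) 1 := by
      rw [← prod_X_pow_eq_monomial]
      refine (Finset.prod_subset (Finset.subset_univ _) ?_).symm
      intro x _ hx
      have : (Finsupp.equivFunOnFinite.symm k) x = 0 := Finsupp.notMem_support_iff.1 hx
      simp only [Finsupp.coe_equivFunOnFinite_symm] at this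
      simp [this]
    rw [hmon, ← map_natCast (C : ℝ →+* MvPolynomial (Fin n) ℝ), coeff_C_mul, coeff_monomial]
    split <;> simp
  rw [Finset.sum_congr rfl (fun k _ => hterm k)]
  by_cases h : (∑ i, γ i) = N
  · rw [if_pos h]
    rw [Finset.sum_eq_single_of_mem (⇑γ : Fin n → ℕ)]
    · rw [if_pos (Finsupp.equivFunOnFinite_symm_coe γ)]
    · rw [Finset.mem_piAntidiag]
      exact ⟨h, fun i _ => Finset.mem_univ i⟩
    · intro k _ hk
      rw [if_neg]
      intro hc
      refine hk ?_
      rw [← hc]; rfl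
  · rw [if_neg h]
    apply Finset.sum_eq_zero
    intro k hk
    rw [Finset.mem_piAntidiag] at hk
    rw [if_neg]
    intro hc
    apply h
    rw [← hk.1, ← hc]
    simp

lemma aux_key (n N d : ℕ) (p : MvPolynomial (Fin n) ℝ) (hp : p.IsHomogeneous d)
    (β : Fin n →₀ ℕ) (hβ : (∑ i, β i) = N + d) :
    (∏ i, ((β i).factorial : ℝ)) * coeff β ((∑ i, X i : MvPolynomial (Fin n) ℝ) ^ N * p) =
      (N.factorial : ℝ) *
        ∑ α ∈ p.support, coeff α p * ∏ i, ((β i).descFactorial (α i) : ℝ) := by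
  conv_lhs => rw [p.as_sum, Finset.mul_sum, coeff_sum]
  rw [Finset.mul_sum, Finset.mul_sum]
  refine Finset.sum_congr rfl ?_
  intro α hα
  have hαd : (∑ i, α i) = d := by
    have h1 : α.degree = d := by
      rw [Finsupp.degree_eq_weight_one]
      exact hp (mem_support_iff.1 hα)
    rw [← h1, Finsupp.degree]
    exact (Finset.sum_subset (Finset.subset_univ _) (fun x _ hx =>
      Finsupp.notMem_support_iff.1 hx)).symm
  rw [coeff_mul_monomial']
  by_cases hle : α ≤ β
  · rw [if_pos hle]
    have hsum : (∑ i, (β - α) i) = N := by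
      have : ∀ i ∈ Finset.univ (α := Fin n), (β - α) i + α i = β i := by
        intro i _
        have := hle i
        simp only [Finsupp.tsub_apply]
        omega
      have h2 : (∑ i, ((β - α) i + α i)) = ∑ i, β i := Finset.sum_congr rfl this
      rw [Finset.sum_add_distrib] at h2
      omega
    rw [aux_coeff_pow, if_pos hsum]
    have hnat : (∏ i, (β i).factorial) * Nat.multinomial univ ⇑(β - α) =
        N.factorial * ∏ i, (β i).descFactorial (α i) := by
      have hfac : ∀ i, (β i).factorial = (β i).descFactorial (α i) * ((β - α) i).factorial := by
        intro i
        have := hle i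
        rw [Finsupp.tsub_apply, mul_comm, Nat.factorial_mul_descFactorial (by omega)]
      calc (∏ i, (β i).factorial) * Nat.multinomial univ ⇑(β - α)
          = (∏ i, (β i).descFactorial (α i)) *
            ((∏ i, ((β - α) i).factorial) * Nat.multinomial univ ⇑(β - α)) := by
            rw [Finset.prod_congr rfl (fun i _ => hfac i), Finset.prod_mul_distrib]; ring
        _ = (∏ i, (β i).descFactorial (α i)) * N.factorial := by
            rw [Nat.multinomial_spec, hsum]
        _ = N.factorial * ∏ i, (β i).descFactorial (α i) := mul_comm _ _
    calc (∏ i, ((β i).factorial : ℝ)) * ((Nat.multinomial univ ⇑(β - α) : ℝ) * coeff α p)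
        = ((∏ i, (β i).factorial) * Nat.multinomial univ ⇑(β - α) : ℕ) * coeff α p := by
          push_cast; ring
      _ = ((N.factorial * ∏ i, (β i).descFactorial (α i) : ℕ) : ℝ) * coeff α p := by rw [hnat]
      _ = (N.factorial : ℝ) * (coeff α p * ∏ i, ((β i).descFactorial (α i) : ℝ)) := by
          push_cast; ring
  · rw [if_neg hle]
    obtain ⟨i, hi⟩ : ∃ i, β i < α i := by
      by_contra hc
      push_neg at hc
      exact hle (fun i => hc i)
    have : ((β i).descFactorial (α i) : ℝ) = 0 := by
      rw [Nat.descFactorial_eq_zero_iff_lt.2 hi]; simp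
    rw [show (∏ i, ((β i).descFactorial (α i) : ℝ)) = 0 from
      Finset.prod_eq_zero (Finset.mem_univ i) this]
    ring

lemma aux_estimate (n d M : ℕ) (hdM : d ≤ M) (hM : 0 < M) (α β : Fin n →₀ ℕ)
    (hα : (∑ i, α i) = d) (hβ : (∑ i, β i) = M) :
    |(∏ i, ((β i).descFactorial (α i) : ℝ)) / (M : ℝ) ^ d -
      ∏ i, ((β i : ℝ) / M) ^ α i| ≤ (d : ℝ) ^ 2 / M := by
  have hMR : (0 : ℝ) < M := by exact_mod_cast hM
  have hβle : ∀ i, (β i : ℝ) ≤ M := by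
    intro i
    exact_mod_cast Finset.single_le_sum (f := fun i => β i) (fun j _ => Nat.zero_le _)
      (Finset.mem_univ i) |>.trans hβ.le
  set U : Fin n → ℝ := fun i => ((β i).descFactorial (α i) : ℝ) / (M : ℝ) ^ (α i) with hU
  set V : Fin n → ℝ := fun i => ((β i : ℝ) / M) ^ α i with hV
  have hUeq : ∀ i, U i = ∏ j ∈ range (α i), (((β i : ℝ) - j) / M) := by
    intro i
    rw [hU]
    simp only
    rw [aux_cast_desc, Finset.prod_div_distrib, Finset.prod_const, Finset.card_range]
  have hVeq : ∀ i, V i = ∏ j ∈ range (α i), ((β i : ℝ) / M) := by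
    intro i
    rw [Finset.prod_const, Finset.card_range]
  have hub : ∀ i, ∀ j ∈ range (α i), |((β i : ℝ) - j) / M| ≤ 1 := by
    intro i j hj
    rw [Finset.mem_range] at hj
    have hjd : (j : ℝ) ≤ M := by
      have : j < d := lt_of_lt_of_le hj (hα ▸ Finset.single_le_sum
        (f := fun i => α i) (fun j _ => Nat.zero_le _) (Finset.mem_univ i))
      exact_mod_cast (this.le.trans hdM)
    rw [abs_div, abs_of_pos hMR, div_le_one hMR, abs_le]
    constructor
    · have := (β i).cast_nonneg (α := ℝ); linarith
    · have := hβle i; linarith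
  have hvb : ∀ i, ∀ j ∈ range (α i), |(β i : ℝ) / M| ≤ 1 := by
    intro i j _
    rw [abs_div, abs_of_pos hMR, div_le_one hMR, abs_of_nonneg (β i).cast_nonneg]
    exact hβle i
  have hinner : ∀ i, |U i - V i| ≤ (α i : ℝ) * (d / M) := by
    intro i
    rw [hUeq, hVeq]
    refine (aux_abs_prod_sub _ _ _ (hub i) (hvb i)).trans ?_
    have : ∀ j ∈ range (α i), |((β i : ℝ) - j) / M - (β i : ℝ) / M| ≤ (d : ℝ) / M := by
      intro j hj
      rw [Finset.mem_range] at hj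
      have hjd : (j : ℝ) ≤ d := by
        have : j < d := lt_of_lt_of_le hj (hα ▸ Finset.single_le_sum
          (f := fun i => α i) (fun j _ => Nat.zero_le _) (Finset.mem_univ i))
        exact_mod_cast this.le
      rw [div_sub_div_same, sub_sub_cancel_left, abs_div, abs_of_pos hMR, abs_neg,
        abs_of_nonneg (Nat.cast_nonneg j)]
      gcongr
    refine (Finset.sum_le_sum this).trans ?_
    rw [Finset.sum_const, Finset.card_range, nsmul_eq_mul]
  have hUb : ∀ i ∈ Finset.univ (α := Fin n), |U i| ≤ 1 := by
    intro i _
    rw [hUeq, Finset.abs_prod]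
    exact Finset.prod_le_one (fun j _ => abs_nonneg _) (hub i)
  have hVb : ∀ i ∈ Finset.univ (α := Fin n), |V i| ≤ 1 := by
    intro i _
    rw [hVeq, Finset.abs_prod]
    exact Finset.prod_le_one (fun j _ => abs_nonneg _) (hvb i)
  have hprodU : (∏ i, U i) = (∏ i, ((β i).descFactorial (α i) : ℝ)) / (M : ℝ) ^ d := by
    rw [hU]
    simp only
    rw [Finset.prod_div_distrib, ← hα, Finset.prod_pow_eq_pow_sum]
  calc |(∏ i, ((β i).descFactorial (α i) : ℝ)) / (M : ℝ) ^ d - ∏ i, ((β i : ℝ) / M) ^ α i|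
      = |∏ i, U i - ∏ i, V i| := by rw [hprodU]
    _ ≤ ∑ i, |U i - V i| := aux_abs_prod_sub _ _ _ hUb hVb
    _ ≤ ∑ i, (α i : ℝ) * ((d : ℝ) / M) := Finset.sum_le_sum (fun i _ => hinner i)
    _ = (d : ℝ) ^ 2 / M := by
        rw [← Finset.sum_mul]
        rw [show (∑ i, (α i : ℝ)) = (d : ℝ) by exact_mod_cast congrArg (Nat.cast (R := ℝ)) hα]
        ring

theorem stmt_18 (n : ℕ) (hn : 0 < n) (p : MvPolynomial (Fin n) ℝ) (d : ℕ)
    (hp : p.IsHomogeneous d)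
    (hpos : ∀ x : Fin n → ℝ, (∀ i, 0 ≤ x i) → (∑ i, x i) = 1 → 0 < eval x p) :
    ∃ N : ℕ,
      (∀ m, 0 ≤ ((∑ i, (X i : MvPolynomial (Fin n) ℝ)) ^ N * p).coeff m) ∧
      (∑ i, (X i : MvPolynomial (Fin n) ℝ)) ^ N * p ≠ 0 ∧
      (∑ i, (X i : MvPolynomial (Fin n) ℝ)) ^ N * p ∈ Ideal.span {p} := by
  classical
  set i0 : Fin n := ⟨0, hn⟩
  have hdeg : ∀ γ : Fin n →₀ ℕ, γ.degree = ∑ i, γ i := fun γ =>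
    Finset.sum_subset (Finset.subset_univ _) (fun x _ hx => Finsupp.notMem_support_iff.1 hx)
  -- the standard simplex is nonempty
  have hne : (stdSimplex ℝ (Fin n)).Nonempty := by
    refine ⟨fun i => if i = i0 then 1 else 0, fun i => by positivity, ?_⟩
    simp
  -- minimum of p on the simplex
  obtain ⟨x₀, hx₀, hmin⟩ := (isCompact_stdSimplex ℝ (Fin n)).exists_isMinOn hne
    (MvPolynomial.continuous_eval (p := p)).continuousOn
  set ε : ℝ := eval x₀ p with hε
  have hε0 : 0 < ε := hpos x₀ hx₀.1 hx₀.2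
  set A : ℝ := ∑ α ∈ p.support, |coeff α p| with hA
  have hA0 : 0 ≤ A := Finset.sum_nonneg fun _ _ => abs_nonneg _
  set N : ℕ := ⌈A * (d : ℝ) ^ 2 / ε⌉₊ + 1 with hN
  set M : ℕ := N + d with hM
  have hM0 : 0 < M := by omega
  have hMR : (0 : ℝ) < M := by exact_mod_cast hM0
  have hdM : d ≤ M := by omega
  have hcε : A * (d : ℝ) ^ 2 / M < ε := by
    rw [div_lt_iff₀ hMR]
    have h1 : A * (d : ℝ) ^ 2 / ε < M := by
      have : A * (d : ℝ) ^ 2 / ε ≤ ⌈A * (d : ℝ) ^ 2 / ε⌉₊ := Nat.le_ceil _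
      have h2 : ((⌈A * (d : ℝ) ^ 2 / ε⌉₊ : ℕ) : ℝ) < M := by
        have : (⌈A * (d : ℝ) ^ 2 / ε⌉₊ : ℕ) < M := by omega
        exact_mod_cast this
      linarith
    calc A * (d : ℝ) ^ 2 = (A * (d : ℝ) ^ 2 / ε) * ε := by field_simp
      _ < M * ε := by gcongr -- needs ε > 0 and strict
      _ = ε * M := mul_comm _ _
  -- key positivity
  have key : ∀ β : Fin n →₀ ℕ, (∑ i, β i) = N + d →
      0 < coeff β ((∑ i, X i : MvPolynomial (Fin n) ℝ) ^ N * p) := by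
    intro β hβ
    set t : Fin n → ℝ := fun i => (β i : ℝ) / M with htdef
    have ht : t ∈ stdSimplex ℝ (Fin n) := by
      constructor
      · intro i; positivity
      · rw [htdef]
        simp only
        rw [← Finset.sum_div]
        rw [show (∑ i, ((β i : ℝ))) = (M : ℝ) by exact_mod_cast congrArg (Nat.cast (R := ℝ)) hβ]
        field_simp
    set Q : ℝ := ∑ α ∈ p.support,
      coeff α p * ((∏ i, ((β i).descFactorial (α i) : ℝ)) / (M : ℝ) ^ d) with hQ
    have hαd : ∀ α ∈ p.support, (∑ i, α i) = d := by
      intro α hα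
      have h1 : α.degree = d := by
        rw [Finsupp.degree_eq_weight_one]
        exact hp (mem_support_iff.1 hα)
      rw [← h1, hdeg]
    have h1 : |Q - eval t p| ≤ A * (d : ℝ) ^ 2 / M := by
      rw [eval_eq', hQ, ← Finset.sum_sub_distrib]
      refine (Finset.abs_sum_le_sum_abs _ _).trans ?_
      have hterm : ∀ α ∈ p.support,
          |coeff α p * ((∏ i, ((β i).descFactorial (α i) : ℝ)) / (M : ℝ) ^ d) -
            coeff α p * ∏ i, t i ^ α i| ≤ |coeff α p| * (d : ℝ) ^ 2 / M := by
        intro α hα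
        rw [← mul_sub, abs_mul]
        have hest := aux_estimate n d M hdM hM0 α β (hαd α hα) hβ
        calc |coeff α p| * |(∏ i, ((β i).descFactorial (α i) : ℝ)) / (M : ℝ) ^ d -
              ∏ i, t i ^ α i| ≤ |coeff α p| * ((d : ℝ) ^ 2 / M) := by
                gcongr
          _ = |coeff α p| * (d : ℝ) ^ 2 / M := by ring
      refine (Finset.sum_le_sum hterm).trans_eq ?_
      rw [hA, ← Finset.sum_div, ← Finset.sum_mul]
    have h2 : ε ≤ eval t p := hmin ht
    have hQpos : 0 < Q := by
      have := (abs_le.1 h1).1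
      linarith
    -- relate to the key identity
    have hid := aux_key n N d p hp β hβ
    have hSQ : (∑ α ∈ p.support, coeff α p * ∏ i, ((β i).descFactorial (α i) : ℝ))
        = (M : ℝ) ^ d * Q := by
      rw [hQ, Finset.mul_sum]
      refine Finset.sum_congr rfl ?_
      intro α _
      have : ((M : ℝ) ^ d) ≠ 0 := by positivity
      field_simp
    have hfacpos : (0 : ℝ) < ∏ i, ((β i).factorial : ℝ) :=
      Finset.prod_pos fun i _ => by exact_mod_cast (β i).factorial_pos
    have hrhs : (0 : ℝ) < (N.factorial : ℝ) *
        ∑ α ∈ p.support, coeff α p * ∏ i, ((β i).descFactorial (α i) : ℝ) := by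
      rw [hSQ]
      have : (0:ℝ) < (N.factorial : ℝ) := by exact_mod_cast N.factorial_pos
      positivity
    rw [← hid] at hrhs
    by_contra hcon
    push_neg at hcon
    nlinarith
  refine ⟨N, ?_, ?_, ?_⟩
  · intro m
    by_cases hm : (∑ i, m i) = N + d
    · exact (key m hm).le
    · have h1 : (∑ i, X i : MvPolynomial (Fin n) ℝ).IsHomogeneous 1 :=
        IsHomogeneous.sum _ _ _ (fun i _ => isHomogeneous_X _ _)
      have hhom : ((∑ i, X i : MvPolynomial (Fin n) ℝ) ^ N * p).IsHomogeneous (1 * N + d) :=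
        (h1.pow N).mul hp
      rw [hhom.coeff_eq_zero (by rw [hdeg m]; omega)]
  · intro h0
    have hk := key (Finsupp.single i0 (N + d))
      (by rw [Finset.sum_congr rfl (fun i (_ : i ∈ univ) => Finsupp.single_apply (a := i0) (b := N + d) (a' := i)), Finset.sum_ite_eq univ i0 fun _ => N + d]
          simp)
    rw [h0] at hk
    simp at hk
  · exact Ideal.mem_span_singleton'.2 ⟨_, rfl⟩
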